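/- Let (X, φ, ⟨⟨·,·⟩⟩) be a Hilbert A-bimodule over a C*-algebra A. Then J_X = I_X, where J_X = φ⁻¹(K(X)) ∩ (ker φ)^⊥ and I_X is the closed linear span of {⟨⟨ξ,η⟩⟩ : ξ,η ∈ X}. -/

import Mathlib

open scoped RightActions

/-- The December 2024 Mathlib notion of a (right) Hilbert C⋆-module, `CStarModule`, with the
right action given by `SMul Aᵐᵒᵖ E`; Mathlib's `CStarModule` now denotes left modules. -/
class RightCStarModule (A E : Type*) [NonUnitalSemiring A] [StarRing A]
    [Module ℂ A] [AddCommGroup E] [Module ℂ E] [PartialOrder A] [SMul Aᵐᵒᵖ E] [Norm A] [Norm E]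
    extends Inner A E where
  inner_add_right {x} {y} {z} : inner x (y + z) = inner x y + inner x z
  inner_self_nonneg {x} : 0 ≤ inner x x
  inner_self {x} : inner x x = 0 ↔ x = 0
  inner_op_smul_right {a : A} {x y : E} : inner x (y <• a) = inner x y * a
  inner_smul_right_complex {z : ℂ} {x} {y} : inner x (z • y) = z • inner x y
  star_inner x y : star (inner x y) = inner y x
  norm_eq_sqrt_norm_inner_self x : ‖x‖ = Real.sqrt ‖inner x x‖

variable {A X : Type*} [NonUnitalCStarAlgebra A] [PartialOrder A] [StarOrderedRing A]
  [NormedAddCommGroup X] [NormedSpace ℂ X] [SMul Aᵐᵒᵖ X] [RightCStarModule A X] [CompleteSpace X]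

/-- `K(X)`: the closed linear span in `B(X)` of the rank-one operators
`θ_{ξ,η} : ζ ↦ ξ • ⟪η, ζ⟫`. -/
def compactOps (A X : Type*) [NonUnitalCStarAlgebra A] [PartialOrder A] [StarOrderedRing A]
    [NormedAddCommGroup X] [NormedSpace ℂ X] [SMul Aᵐᵒᵖ X] [RightCStarModule A X]
    [CompleteSpace X] : Set (X →L[ℂ] X) :=
  closure (Submodule.span ℂ
    {T : X →L[ℂ] X | ∃ ξ η : X, ∀ ζ : X, T ζ = ξ <• (inner A η ζ : A)} : Set (X →L[ℂ] X))

/-- The ideal `J_X = φ⁻¹(K(X)) ∩ (ker φ)^⊥` of Katsura, as a subset of `A`. -/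
def KatsuraIdeal (φ : A →ₙₐ[ℂ] (X →L[ℂ] X)) : Set A :=
  {a : A | φ a ∈ compactOps A X} ∩ {a : A | ∀ b : A, φ b = 0 → a * b = 0}

/-!
Since `c ⟨⟨ξ, η⟩⟩ = ⟨⟨φ(c) ξ, η⟩⟩`, the kernel of `φ` annihilates `I_X`, and since
`φ⟨⟨ξ, η⟩⟩ = θ_{ξ,η}`, `φ` maps `I_X` into `K(X)`; so `I_X ⊆ J_X`. The heart of the matter is
that `φ` is isometric on `I_X`. Then `φ(I_X)` is closed, hence equal to `K(X)`, and for
`a ∈ J_X` there is `b ∈ I_X` with `φ a = φ b`; now `a - b` lies in both `ker φ` and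
`(ker φ)^⊥`, so `a = b`.

For the isometry, `φ` is first seen to be contractive: `φ(a*)` is the adjoint of `φ(a)` for the
right inner product, so `a ↦ ⟪ζ, φ(a) ζ⟫` is positive, and Cauchy–Schwarz bounds it by
`‖a‖ ‖ζ‖²`. By the closed graph theorem, `⟨⟨·, η⟩⟩` is then continuous. Hence for
`x = ∑ cᵢ ⟨⟨ξᵢ, ηᵢ⟩⟩` and any `b`, `bⁿ x = ∑ cᵢ ⟨⟨φ(b)ⁿ ξᵢ, ηᵢ⟩⟩ = O(‖φ b‖ⁿ)`. For self-adjoint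
`b = x` the left side has norm `‖b‖ⁿ⁺¹` along `n + 1 = 2ᵏ`, which forces `‖b‖ ≤ ‖φ b‖`; the
C⋆-identity extends this to all `x`.
-/

namespace RightCStarModule

variable {A E : Type*} [NonUnitalCStarAlgebra A] [PartialOrder A]
  [NormedAddCommGroup E] [NormedSpace ℂ E] [SMul Aᵐᵒᵖ E] [RightCStarModule A E]

local notation "⟪" x ", " y "⟫" => inner A x y

lemma inner_sub_right {x y z : E} : ⟪x, y - z⟫ = ⟪x, y⟫ - ⟪x, z⟫ := by
  rw [eq_sub_iff_add_eq, ← inner_add_right, sub_add_cancel]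

lemma inner_zero_right {x : E} : ⟪x, 0⟫ = 0 := by
  rw [← sub_self (0 : E), inner_sub_right, sub_self]

lemma inner_sub_left {x y z : E} : ⟪x - y, z⟫ = ⟪x, z⟫ - ⟪y, z⟫ := by
  rw [← star_inner z, inner_sub_right, star_sub, star_inner, star_inner]

lemma inner_op_smul_left {a : A} {x y : E} : ⟪x <• a, y⟫ = star a * ⟪x, y⟫ := by
  rw [← star_inner y, inner_op_smul_right, star_mul, star_inner]

lemma inner_smul_right_real {r : ℝ} {x y : E} : ⟪x, r • y⟫ = r • ⟪x, y⟫ := by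
  rw [← Complex.coe_smul, inner_smul_right_complex, Complex.coe_smul]

lemma inner_smul_left_real {r : ℝ} {x y : E} : ⟪r • x, y⟫ = r • ⟪x, y⟫ := by
  rw [← star_inner y, inner_smul_right_real, star_smul, star_trivial, star_inner]

lemma norm_sq_eq (x : E) : ‖x‖ ^ 2 = ‖⟪x, x⟫‖ := by
  rw [norm_eq_sqrt_norm_inner_self (A := A) x, Real.sq_sqrt (norm_nonneg _)]

lemma norm_op_smul_le (x : E) (a : A) : ‖x <• a‖ ≤ ‖x‖ * ‖a‖ := by
  refine (pow_le_pow_iff_left₀ (norm_nonneg _) (by positivity) two_ne_zero).1 ?_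
  calc ‖x <• a‖ ^ 2 = ‖star a * (⟪x, x⟫ * a)‖ := by
        rw [norm_sq_eq (A := A), inner_op_smul_left, inner_op_smul_right]
    _ ≤ ‖a‖ * (‖⟪x, x⟫‖ * ‖a‖) := by
        grw [norm_mul_le, norm_mul_le, norm_star]
    _ = (‖x‖ * ‖a‖) ^ 2 := by rw [← norm_sq_eq (A := A)]; ring

lemma inner_eq_of_forall_op_smul_eq {x y z w : E}
    (h : ∀ v : E, v <• ⟪x, y⟫ = v <• ⟪z, w⟫) : ⟪x, y⟫ = ⟪z, w⟫ := by
  have hd : ∀ u v : E, ⟪u, v⟫ * (⟪x, y⟫ - ⟪z, w⟫) = 0 := fun u v => by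
    rw [mul_sub, ← inner_op_smul_right, ← inner_op_smul_right, h, sub_self]
  have hstar : star (⟪x, y⟫ - ⟪z, w⟫) = ⟪y, x⟫ - ⟪w, z⟫ := by
    rw [star_sub, star_inner, star_inner]
  rw [← sub_eq_zero, ← CStarRing.star_mul_self_eq_zero_iff, hstar, sub_mul, hd, hd, sub_zero]

variable [StarOrderedRing A]

lemma inner_mul_inner_swap_le (x y : E) : ⟪y, x⟫ * ⟪x, y⟫ ≤ ‖x‖ ^ 2 • ⟪y, y⟫ := by
  rcases eq_or_ne x 0 with rfl | hx
  · rw [← star_inner y, inner_zero_right, star_zero, zero_mul, norm_zero]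
    simp
  set c := ⟪x, y⟫ with hc
  have hyx : ⟪y, x⟫ = star c := (star_inner x y).symm
  have hconj : star c * ⟪x, x⟫ * c ≤ ‖x‖ ^ 2 • (star c * c) := by
    rw [norm_sq_eq (A := A)]
    exact CStarAlgebra.star_left_conjugate_le_norm_smul (star_inner x x)
  set t := ‖x‖ ^ 2
  have h : 0 ≤ t • (t • ⟪y, y⟫ - star c * c) :=
    calc (0 : A) ≤ ⟪x <• c - t • y, x <• c - t • y⟫ := inner_self_nonneg
      _ = star c * ⟪x, x⟫ * c - t • (star c * c) - t • (star c * c) + t • t • ⟪y, y⟫ := by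
        simp only [inner_sub_left, inner_sub_right, inner_op_smul_left, inner_op_smul_right,
          inner_smul_left_real, inner_smul_right_real, hyx, ← hc, sub_mul, smul_sub, smul_mul_assoc,
          mul_assoc]
        abel
      _ ≤ t • (star c * c) - t • (star c * c) - t • (star c * c) + t • t • ⟪y, y⟫ := by
        gcongr
      _ = t • (t • ⟪y, y⟫ - star c * c) := by module
  rw [hyx, ← sub_nonneg]
  exact nonneg_of_smul_nonneg_of_pos_left h (by positivity)

lemma norm_inner_le (x y : E) : ‖⟪x, y⟫‖ ≤ ‖x‖ * ‖y‖ := by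
  refine (pow_le_pow_iff_left₀ (norm_nonneg _) (by positivity) two_ne_zero).1 ?_
  calc ‖⟪x, y⟫‖ ^ 2 = ‖⟪y, x⟫ * ⟪x, y⟫‖ := by
        rw [← star_inner x y, CStarRing.norm_star_mul_self, sq]
    _ ≤ ‖‖x‖ ^ 2 • ⟪y, y⟫‖ :=
        CStarAlgebra.norm_le_norm_of_nonneg_of_le
          (by rw [← star_inner x y]; exact star_mul_self_nonneg _) (inner_mul_inner_swap_le x y)
    _ = (‖x‖ * ‖y‖) ^ 2 := by
        rw [norm_smul, Real.norm_of_nonneg (by positivity), ← norm_sq_eq (A := A)]; ring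

end RightCStarModule

lemma CStarAlgebra.mul_self_le_norm_smul {A : Type*} [NonUnitalCStarAlgebra A] [PartialOrder A]
    [StarOrderedRing A] {a : A} (ha : 0 ≤ a) : a * a ≤ ‖a‖ • a := by
  obtain ⟨b, hb, rfl⟩ := CStarAlgebra.nonneg_iff_exists_isSelfAdjoint_and_eq_mul_self.1 ha
  have hbb : IsSelfAdjoint (b * b) := by simpa only [hb.star_eq] using IsSelfAdjoint.star_mul_self b
  simpa only [hb.star_eq, mul_assoc] using
    CStarAlgebra.star_left_conjugate_le_norm_smul (a := b) (b := b * b) hbb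

open Filter Topology in
lemma le_of_frequently_pow_succ_le {R M K : ℝ} (hM : 0 ≤ M)
    (h : ∃ᶠ n in atTop, R ^ (n + 1) ≤ K * M ^ n) : R ≤ M := by
  by_contra! hMR
  have hR : 0 < R := hM.trans_lt hMR
  have hlim : Tendsto (fun n : ℕ => K * (M / R) ^ n) atTop (𝓝 0) := by
    simpa using (tendsto_pow_atTop_nhds_zero_of_lt_one (div_nonneg hM hR.le)
      ((div_lt_one hR).2 hMR)).const_mul K
  obtain ⟨n, hn, hsmall⟩ := (h.and_eventually (hlim.eventually_lt_const hR)).exists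
  rw [div_pow, mul_div_assoc', div_lt_iff₀ (pow_pos hR n), ← pow_succ'] at hsmall
  linarith

lemma ContinuousLinearMap.norm_pow_apply_le {𝕜 E : Type*} [NontriviallyNormedField 𝕜]
    [NormedAddCommGroup E] [NormedSpace 𝕜 E] (T : E →L[𝕜] E) (n : ℕ) (x : E) :
    ‖(T ^ n) x‖ ≤ ‖T‖ ^ n * ‖x‖ := by
  induction n with
  | zero => simp
  | succ n ih =>
    calc ‖(T ^ (n + 1)) x‖ ≤ ‖T‖ * ‖(T ^ n) x‖ := by
          rw [pow_succ', mul_apply_eq_comp]; exact T.le_opNorm _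
      _ ≤ ‖T‖ ^ (n + 1) * ‖x‖ := by grw [ih]; rw [pow_succ', mul_assoc]

/-- `(mulLeft b ^ n) b` is `b ^ (n + 1)`, computed in the unitization since `A` has no powers. -/
lemma IsSelfAdjoint.norm_mulLeft_pow_two_pow_sub_one {A : Type*} [NonUnitalCStarAlgebra A]
    {b : A} (hb : IsSelfAdjoint b) (k : ℕ) :
    ‖(LinearMap.mulLeft ℂ b ^ (2 ^ k - 1)) b‖ = ‖b‖ ^ 2 ^ k := by
  have hinr : ∀ n : ℕ, (((LinearMap.mulLeft ℂ b ^ n) b : A) : Unitization ℂ A) =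
      (b : Unitization ℂ A) ^ (n + 1) := by
    intro n
    induction n with
    | zero => simp
    | succ n ih =>
      rw [pow_succ', Module.End.mul_apply, LinearMap.mulLeft_apply, Unitization.inr_mul, ih,
        ← pow_succ']
  rw [← Unitization.norm_inr (𝕜 := ℂ), hinr, Nat.sub_add_cancel Nat.one_le_two_pow,
    (hb.inr (R := ℂ)).norm_pow_two_pow, Unitization.norm_inr]

section LeftInnerIdeal

variable {A E : Type*} [NonUnitalCStarAlgebra A]

def leftInnerSpan (L : E → E → A) : Submodule ℂ A :=
  Submodule.span ℂ {x | ∃ ξ η, x = L ξ η}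

def leftInnerIdeal (L : E → E → A) : Submodule ℂ A :=
  (leftInnerSpan L).topologicalClosure

variable {L : E → E → A}

lemma leftInner_mem_leftInnerSpan (ξ η : E) : L ξ η ∈ leftInnerSpan L :=
  Submodule.subset_span ⟨ξ, η, rfl⟩

lemma leftInnerSpan_le_leftInnerIdeal : leftInnerSpan L ≤ leftInnerIdeal L :=
  Submodule.le_topologicalClosure _

lemma isClosed_leftInnerIdeal : IsClosed (leftInnerIdeal L : Set A) :=
  Submodule.isClosed_topologicalClosure _

lemma leftInnerSpan_le_comap {σ : ℂ →+* ℂ} (f : A →ₛₗ[σ] A)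
    (h : ∀ ξ η, f (L ξ η) ∈ leftInnerSpan L) : leftInnerSpan L ≤ (leftInnerSpan L).comap f :=
  Submodule.span_le.2 fun _ ⟨ξ, η, hx⟩ => hx ▸ h ξ η

end LeftInnerIdeal

section Bimodule

variable {A E : Type*} [NonUnitalCStarAlgebra A] [PartialOrder A]
  [NormedAddCommGroup E] [NormedSpace ℂ E] [SMul Aᵐᵒᵖ E] [RightCStarModule A E]

local notation "⟪" x ", " y "⟫" => inner A x y

structure IsLeftInnerPairing (φ : A →ₙₐ[ℂ] (E →L[ℂ] E)) (L : E → E → A) : Prop where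
  add_left : ∀ ξ₁ ξ₂ η, L (ξ₁ + ξ₂) η = L ξ₁ η + L ξ₂ η
  smul_left : ∀ (c : ℂ) ξ η, L (c • ξ) η = c • L ξ η
  map_left : ∀ a ξ η, L (φ a ξ) η = a * L ξ η
  eq_star_swap : ∀ ξ η, L ξ η = star (L η ξ)
  map_apply : ∀ ξ η ζ, φ (L ξ η) ζ = ξ <• ⟪η, ζ⟫

namespace IsLeftInnerPairing

variable {φ : A →ₙₐ[ℂ] (E →L[ℂ] E)} {L : E → E → A}

def linearLeft (hL : IsLeftInnerPairing φ L) (η : E) : E →ₗ[ℂ] A where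
  toFun ξ := L ξ η
  map_add' ξ₁ ξ₂ := hL.add_left ξ₁ ξ₂ η
  map_smul' c ξ := hL.smul_left c ξ η

lemma linearLeft_apply (hL : IsLeftInnerPairing φ L) (ξ η : E) : hL.linearLeft η ξ = L ξ η :=
  rfl

lemma map_star_right (hL : IsLeftInnerPairing φ L) (a : A) (ξ η : E) :
    L ξ (φ (star a) η) = L ξ η * a := by
  rw [hL.eq_star_swap ξ, hL.eq_star_swap ξ, hL.map_left, star_mul, star_star]

lemma star_mem (hL : IsLeftInnerPairing φ L) {x : A} (hx : x ∈ leftInnerIdeal L) :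
    star x ∈ leftInnerIdeal L :=
  map_mem_closure continuous_star hx fun _ hy =>
    leftInnerSpan_le_comap (starLinearEquiv ℂ : A ≃ₗ⋆[ℂ] A).toLinearMap
      (fun ξ η => by simpa [hL.eq_star_swap η ξ] using leftInner_mem_leftInnerSpan (L := L) η ξ) hy

lemma mul_mem_span_left (hL : IsLeftInnerPairing φ L) (a : A) {x : A}
    (hx : x ∈ leftInnerSpan L) : a * x ∈ leftInnerSpan L :=
  leftInnerSpan_le_comap (LinearMap.mulLeft ℂ a)
    (fun ξ η => by simpa [hL.map_left] using leftInner_mem_leftInnerSpan (L := L) (φ a ξ) η) hx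

lemma mul_eq_zero_of_map_eq_zero (hL : IsLeftInnerPairing φ L) {c x : A} (hc : φ c = 0)
    (hx : x ∈ leftInnerIdeal L) : c * x = 0 := by
  have hspan : leftInnerSpan L ≤ LinearMap.ker (LinearMap.mulLeft ℂ c) :=
    Submodule.span_le.2 fun _ ⟨ξ, η, hx⟩ => by
      rw [SetLike.mem_coe, LinearMap.mem_ker, LinearMap.mulLeft_apply, hx, ← hL.map_left, hc,
        zero_apply, ← hL.linearLeft_apply, map_zero]
  exact Submodule.topologicalClosure_minimal _ hspan
    (isClosed_eq (continuous_const_mul c) continuous_const) hx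

lemma inner_map_star_left (hL : IsLeftInnerPairing φ L) (a : A) (ω γ : E) :
    ⟪φ (star a) ω, γ⟫ = ⟪ω, φ a γ⟫ :=
  RightCStarModule.inner_eq_of_forall_op_smul_eq fun ζ => by
    rw [← hL.map_apply, ← hL.map_apply, hL.map_star_right, map_mul, mul_apply_eq_comp]

lemma inner_map_star_mul_self (hL : IsLeftInnerPairing φ L) (a : A) (ζ : E) :
    ⟪ζ, φ (star a * a) ζ⟫ = ⟪φ a ζ, φ a ζ⟫ := by
  rw [map_mul, mul_apply_eq_comp, ← hL.inner_map_star_left, star_star]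

lemma map_star_eq_zero (hL : IsLeftInnerPairing φ L) {c : A} (hc : φ c = 0) :
    φ (star c) = 0 := by
  ext ω
  rw [zero_apply, ← RightCStarModule.inner_self (A := A), hL.inner_map_star_left, hc,
    zero_apply, RightCStarModule.inner_zero_right]

lemma mul_eq_zero_of_map_eq_zero_right (hL : IsLeftInnerPairing φ L) {x c : A}
    (hx : x ∈ leftInnerIdeal L) (hc : φ c = 0) : x * c = 0 := by
  rw [← star_star (x * c), star_mul, hL.mul_eq_zero_of_map_eq_zero (hL.map_star_eq_zero hc)
    (hL.star_mem hx), star_zero]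

lemma eq_zero_of_map_eq_zero (hL : IsLeftInnerPairing φ L) {x : A}
    (hx : x ∈ leftInnerIdeal L) (h : φ x = 0) : x = 0 :=
  (CStarRing.mul_star_self_eq_zero_iff x).1
    (hL.mul_eq_zero_of_map_eq_zero_right hx (hL.map_star_eq_zero h))

lemma mulLeft_pow_leftInner (hL : IsLeftInnerPairing φ L) (b : A) (n : ℕ) (ξ η : E) :
    (LinearMap.mulLeft ℂ b ^ n) (L ξ η) = L ((φ b ^ n) ξ) η := by
  induction n with
  | zero => simp
  | succ n ih =>
    rw [pow_succ', Module.End.mul_apply, ih, LinearMap.mulLeft_apply, ← hL.map_left, pow_succ',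
      mul_apply_eq_comp]

lemma image_leftInner_eq (hL : IsLeftInnerPairing φ L) :
    φ '' {x | ∃ ξ η, x = L ξ η} = {T : E →L[ℂ] E | ∃ ξ η, ∀ ζ, T ζ = ξ <• ⟪η, ζ⟫} := by
  ext T
  constructor
  · rintro ⟨_, ⟨ξ, η, rfl⟩, rfl⟩
    exact ⟨ξ, η, hL.map_apply ξ η⟩
  · rintro ⟨ξ, η, hT⟩
    exact ⟨L ξ η, ⟨ξ, η, rfl⟩,
      ContinuousLinearMap.ext fun ζ => (hL.map_apply ξ η ζ).trans (hT ζ).symm⟩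

variable [StarOrderedRing A]

lemma inner_map_nonneg (hL : IsLeftInnerPairing φ L) {a : A} (ha : 0 ≤ a) (ζ : E) :
    0 ≤ ⟪ζ, φ a ζ⟫ := by
  obtain ⟨s, rfl⟩ := CStarAlgebra.nonneg_iff_eq_star_mul_self.1 ha
  rw [hL.inner_map_star_mul_self]
  exact RightCStarModule.inner_self_nonneg

lemma inner_map_mono (hL : IsLeftInnerPairing φ L) {a b : A} (hab : a ≤ b) (ζ : E) :
    ⟪ζ, φ a ζ⟫ ≤ ⟪ζ, φ b ζ⟫ := by
  have := hL.inner_map_nonneg (sub_nonneg.2 hab) ζ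
  rwa [map_sub, sub_apply, RightCStarModule.inner_sub_right, sub_nonneg] at this

lemma inner_map_self_le (hL : IsLeftInnerPairing φ L) {e : A} (he : 0 ≤ e) (ζ : E) :
    ⟪φ e ζ, φ e ζ⟫ ≤ ‖e‖ • ⟪ζ, φ e ζ⟫ :=
  calc ⟪φ e ζ, φ e ζ⟫ = ⟪ζ, φ (e * e) ζ⟫ := by
        rw [← hL.inner_map_star_mul_self, he.isSelfAdjoint.star_eq]
    _ ≤ ⟪ζ, φ ((‖e‖ : ℂ) • e) ζ⟫ := by
        rw [Complex.coe_smul]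
        exact hL.inner_map_mono (CStarAlgebra.mul_self_le_norm_smul he) ζ
    _ = ‖e‖ • ⟪ζ, φ e ζ⟫ := by
        rw [map_smul, smul_apply, RightCStarModule.inner_smul_right_complex, Complex.coe_smul]

lemma norm_inner_map_le (hL : IsLeftInnerPairing φ L) {e : A} (he : 0 ≤ e) (ζ : E) :
    ‖⟪ζ, φ e ζ⟫‖ ≤ ‖e‖ * ‖ζ‖ ^ 2 := by
  have hw : 0 ≤ ⟪ζ, φ e ζ⟫ := hL.inner_map_nonneg he ζ
  have hcs := RightCStarModule.inner_mul_inner_swap_le (A := A) ζ (φ e ζ)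
  rw [← RightCStarModule.star_inner ζ, hw.isSelfAdjoint.star_eq] at hcs
  have hsq := hL.inner_map_self_le he ζ
  set w := ⟪ζ, φ e ζ⟫
  have hnorm : ‖w‖ * ‖w‖ ≤ (‖e‖ * ‖ζ‖ ^ 2) * ‖w‖ :=
    calc ‖w‖ * ‖w‖ = ‖w * w‖ := by
          rw [← CStarRing.norm_star_mul_self, hw.isSelfAdjoint.star_eq]
      _ ≤ ‖ζ‖ ^ 2 * ‖⟪φ e ζ, φ e ζ⟫‖ := by
          refine (CStarAlgebra.norm_le_norm_of_nonneg_of_le ?_ hcs).trans_eq ?_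
          · simpa only [hw.isSelfAdjoint.star_eq] using star_mul_self_nonneg w
          · rw [norm_smul, Real.norm_of_nonneg (by positivity)]
      _ ≤ ‖ζ‖ ^ 2 * (‖e‖ * ‖w‖) := by
          gcongr
          refine (CStarAlgebra.norm_le_norm_of_nonneg_of_le
            RightCStarModule.inner_self_nonneg hsq).trans_eq ?_
          rw [norm_smul, Real.norm_of_nonneg (norm_nonneg e)]
      _ = (‖e‖ * ‖ζ‖ ^ 2) * ‖w‖ := by ring
  nlinarith [norm_nonneg w, mul_nonneg (norm_nonneg e) (sq_nonneg ‖ζ‖)]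

lemma norm_map_le (hL : IsLeftInnerPairing φ L) (a : A) : ‖φ a‖ ≤ ‖a‖ := by
  refine ContinuousLinearMap.opNorm_le_bound _ (norm_nonneg a) fun ζ => ?_
  refine (pow_le_pow_iff_left₀ (norm_nonneg _) (by positivity) two_ne_zero).1 ?_
  calc ‖φ a ζ‖ ^ 2 = ‖⟪ζ, φ (star a * a) ζ⟫‖ := by
        rw [hL.inner_map_star_mul_self, RightCStarModule.norm_sq_eq (A := A)]
    _ ≤ ‖star a * a‖ * ‖ζ‖ ^ 2 := hL.norm_inner_map_le (star_mul_self_nonneg a) ζ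
    _ = (‖a‖ * ‖ζ‖) ^ 2 := by rw [CStarRing.norm_star_mul_self]; ring

lemma continuous (hL : IsLeftInnerPairing φ L) : Continuous φ :=
  AddMonoidHomClass.continuous_of_bound φ 1 fun a => by simpa using hL.norm_map_le a

lemma norm_map_leftInner_le (hL : IsLeftInnerPairing φ L) (ξ η : E) :
    ‖φ (L ξ η)‖ ≤ ‖ξ‖ * ‖η‖ :=
  ContinuousLinearMap.opNorm_le_bound _ (by positivity) fun ζ => by
    rw [hL.map_apply]
    calc ‖ξ <• ⟪η, ζ⟫‖ ≤ ‖ξ‖ * ‖⟪η, ζ⟫‖ := RightCStarModule.norm_op_smul_le ξ _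
      _ ≤ ‖ξ‖ * (‖η‖ * ‖ζ‖) := by grw [RightCStarModule.norm_inner_le η ζ]
      _ = ‖ξ‖ * ‖η‖ * ‖ζ‖ := by ring

variable [CompleteSpace E]

lemma continuous_linearLeft (hL : IsLeftInnerPairing φ L) (η : E) :
    Continuous (hL.linearLeft η) := by
  refine (hL.linearLeft η).continuous_of_seq_closed_graph fun u x m hu hum => ?_
  have hθ : Continuous fun ξ => φ (L ξ η) :=
    AddMonoidHomClass.continuous_of_bound ((φ : A →ₗ[ℂ] (E →L[ℂ] E)) ∘ₗ hL.linearLeft η) ‖η‖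
      fun ξ => (hL.norm_map_leftInner_le ξ η).trans_eq (mul_comm _ _)
  have hm : m ∈ leftInnerIdeal L := isClosed_leftInnerIdeal.mem_of_tendsto hum
    (Filter.Eventually.of_forall fun n =>
      leftInnerSpan_le_leftInnerIdeal (leftInner_mem_leftInnerSpan (u n) η))
  have hφ : φ m = φ (L x η) :=
    tendsto_nhds_unique ((hL.continuous.tendsto m).comp hum) ((hθ.tendsto x).comp hu)
  rw [← sub_eq_zero]
  refine hL.eq_zero_of_map_eq_zero
    (sub_mem hm (leftInnerSpan_le_leftInnerIdeal (leftInner_mem_leftInnerSpan x η))) ?_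
  rw [map_sub, hφ, linearLeft_apply, sub_self]

lemma exists_norm_mulLeft_pow_le (hL : IsLeftInnerPairing φ L) (b : A) {x : A}
    (hx : x ∈ leftInnerSpan L) : ∃ K, ∀ n : ℕ, ‖(LinearMap.mulLeft ℂ b ^ n) x‖ ≤ K * ‖φ b‖ ^ n := by
  induction hx using Submodule.span_induction with
  | mem y hy =>
    obtain ⟨ξ, η, rfl⟩ := hy
    obtain ⟨C, hC0, hC⟩ := SemilinearMapClass.bound_of_continuous _ (hL.continuous_linearLeft η)
    refine ⟨C * ‖ξ‖, fun n => ?_⟩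
    calc ‖(LinearMap.mulLeft ℂ b ^ n) (L ξ η)‖ = ‖hL.linearLeft η ((φ b ^ n) ξ)‖ := by
          rw [hL.mulLeft_pow_leftInner, linearLeft_apply]
      _ ≤ C * (‖φ b‖ ^ n * ‖ξ‖) :=
        (hC _).trans <|
          mul_le_mul_of_nonneg_left (ContinuousLinearMap.norm_pow_apply_le _ _ _) hC0.le
      _ = C * ‖ξ‖ * ‖φ b‖ ^ n := by ring
  | zero => exact ⟨0, fun n => by simp⟩
  | add y z _ _ hy hz =>
    obtain ⟨K₁, h₁⟩ := hy
    obtain ⟨K₂, h₂⟩ := hz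
    exact ⟨K₁ + K₂, fun n => by
      grw [map_add, norm_add_le, h₁, h₂, add_mul]⟩
  | smul c y _ hy =>
    obtain ⟨K, hK⟩ := hy
    exact ⟨‖c‖ * K, fun n => by grw [map_smul, norm_smul, hK, mul_assoc]⟩

lemma norm_le_norm_map_of_isSelfAdjoint (hL : IsLeftInnerPairing φ L) {b : A}
    (hb : b ∈ leftInnerSpan L) (hsa : IsSelfAdjoint b) : ‖b‖ ≤ ‖φ b‖ := by
  obtain ⟨K, hK⟩ := hL.exists_norm_mulLeft_pow_le b hb
  refine le_of_frequently_pow_succ_le (K := K) (norm_nonneg _)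
    (Filter.frequently_atTop.2 fun m => ⟨2 ^ m - 1, ?_, ?_⟩)
  · have := Nat.lt_two_pow_self (n := m)
    omega
  · rw [Nat.sub_add_cancel Nat.one_le_two_pow, ← hsa.norm_mulLeft_pow_two_pow_sub_one]
    exact hK _

lemma norm_le_norm_map_of_mem_span (hL : IsLeftInnerPairing φ L) {x : A}
    (hx : x ∈ leftInnerSpan L) : ‖x‖ ≤ ‖φ x‖ := by
  have h : ‖x‖ * ‖x‖ ≤ ‖x‖ * ‖φ x‖ :=
    calc ‖x‖ * ‖x‖ = ‖star x * x‖ := CStarRing.norm_star_mul_self.symm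
      _ ≤ ‖φ (star x * x)‖ :=
        hL.norm_le_norm_map_of_isSelfAdjoint (hL.mul_mem_span_left _ hx) (.star_mul_self x)
      _ ≤ ‖φ (star x)‖ * ‖φ x‖ := by rw [map_mul]; exact norm_mul_le _ _
      _ ≤ ‖x‖ * ‖φ x‖ := by grw [hL.norm_map_le, norm_star]
  rcases (norm_nonneg x).eq_or_lt with h0 | hpos
  · rw [← h0]
    exact norm_nonneg _
  · exact le_of_mul_le_mul_left h hpos

lemma norm_map_of_mem (hL : IsLeftInnerPairing φ L) {x : A} (hx : x ∈ leftInnerIdeal L) :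
    ‖φ x‖ = ‖x‖ :=
  (hL.norm_map_le x).antisymm <|
    closure_minimal (fun _ hy => hL.norm_le_norm_map_of_mem_span hy)
      (isClosed_le continuous_norm (continuous_norm.comp hL.continuous)) hx

lemma isClosed_image_leftInnerIdeal (hL : IsLeftInnerPairing φ L) :
    IsClosed (φ '' leftInnerIdeal L) := by
  have hiso : Isometry fun x : leftInnerIdeal L => φ x := Isometry.of_dist_eq fun x y => by
    rw [dist_eq_norm, dist_eq_norm, ← map_sub, ← Submodule.coe_sub, hL.norm_map_of_mem (x - y).2,
      Submodule.coe_norm]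
  have : CompleteSpace (leftInnerIdeal L) := isClosed_leftInnerIdeal.completeSpace_coe
  rw [Set.image_eq_range]
  exact hiso.isClosedEmbedding.isClosed_range

lemma compactOps_eq_image (hL : IsLeftInnerPairing φ L) :
    compactOps A E = φ '' leftInnerIdeal L := by
  have hspan : (Submodule.span ℂ {T : E →L[ℂ] E | ∃ ξ η, ∀ ζ, T ζ = ξ <• ⟪η, ζ⟫} : Set _) =
      φ '' leftInnerSpan L := by
    rw [← hL.image_leftInner_eq]
    exact (congrArg SetLike.coe (Submodule.span_image (φ : A →ₗ[ℂ] (E →L[ℂ] E)))).trans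
      (Submodule.map_coe _ _)
  apply subset_antisymm
  · exact closure_minimal (hspan ▸ Set.image_mono leftInnerSpan_le_leftInnerIdeal)
      hL.isClosed_image_leftInnerIdeal
  · rw [compactOps, hspan, leftInnerIdeal, Submodule.topologicalClosure_coe]
    exact image_closure_subset_closure_image hL.continuous

end IsLeftInnerPairing

end Bimodule

theorem bimodule_katsuraIdeal_eq_IX_general (φ : A →ₙₐ[ℂ] (X →L[ℂ] X))
    (L : X → X → A)
    (hadd : ∀ ξ₁ ξ₂ η : X, L (ξ₁ + ξ₂) η = L ξ₁ η + L ξ₂ η)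
    (hsmul : ∀ (c : ℂ) (ξ η : X), L (c • ξ) η = c • L ξ η)
    (h1 : ∀ (a : A) (ξ η : X), L (φ a ξ) η = a * L ξ η)
    (h2 : ∀ ξ η : X, L ξ η = star (L η ξ))
    (h4 : ∀ ξ η ζ : X, φ (L ξ η) ζ = ξ <• (inner A η ζ : A)) :
    KatsuraIdeal φ =
      closure (Submodule.span ℂ {x : A | ∃ ξ η : X, x = L ξ η} : Set A) := by
  have hL : IsLeftInnerPairing φ L := ⟨hadd, hsmul, h1, h2, h4⟩
  change KatsuraIdeal φ = (leftInnerIdeal L : Set A)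
  ext a
  constructor
  · rintro ⟨hK, hperp⟩
    obtain ⟨b, hb, hφb⟩ : φ a ∈ φ '' leftInnerIdeal L := hL.compactOps_eq_image ▸ hK
    have hker : φ (star (a - b)) = 0 := hL.map_star_eq_zero (by rw [map_sub, hφb, sub_self])
    have hab : (a - b) * star (a - b) = 0 := by
      rw [sub_mul, hperp _ hker, hL.mul_eq_zero_of_map_eq_zero_right hb hker, sub_zero]
    rwa [sub_eq_zero.1 ((CStarRing.mul_star_self_eq_zero_iff _).1 hab)]
  · intro ha
    exact ⟨hL.compactOps_eq_image ▸ ⟨a, ha, rfl⟩,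
      fun c hc => hL.mul_eq_zero_of_map_eq_zero_right ha hc⟩

/-- Let `(X, φ, L)` be a Hilbert `A`-bimodule (here `L ξ η = ⟨⟨ξ, η⟩⟩` is the left inner
product).  Then `J_X = I_X`, where `J_X = φ⁻¹(K(X)) ∩ (ker φ)^⊥` and `I_X` is the closed
linear span of `{⟨⟨ξ, η⟩⟩ : ξ, η ∈ X}`. -/
theorem bimodule_katsuraIdeal_eq_IX (φ : A →ₙₐ[ℂ] (X →L[ℂ] X))
    (hmod : ∀ (a : A) (ξ : X) (b : A), φ a (ξ <• b) = (φ a ξ) <• b)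
    (L : X → X → A)
    (hadd : ∀ ξ₁ ξ₂ η : X, L (ξ₁ + ξ₂) η = L ξ₁ η + L ξ₂ η)
    (hsmul : ∀ (c : ℂ) (ξ η : X), L (c • ξ) η = c • L ξ η)
    (h1 : ∀ (a : A) (ξ η : X), L (φ a ξ) η = a * L ξ η)
    (h2 : ∀ ξ η : X, L ξ η = star (L η ξ))
    (h3 : ∀ ξ : X, 0 ≤ L ξ ξ)
    (h4 : ∀ ξ η ζ : X, φ (L ξ η) ζ = ξ <• (inner A η ζ : A)) :
    KatsuraIdeal φ =
      closure (Submodule.span ℂ {x : A | ∃ ξ η : X, x = L ξ η} : Set A) :=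
  bimodule_katsuraIdeal_eq_IX_general φ L hadd hsmul h1 h2 h4
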